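/- Let R = ℂ[ħ] be the polynomial ring in a variable ħ and consider R-linear endomorphisms of the polynomial ring R[x₁, x₂, x₃], where ∂_i denotes the formal partial derivative with respect to x_i and x_i and scalars act by multiplication. Define L₁ := ħ∂₁ − ħ(3x₁∂₁ + 5x₂∂₂ + x₃∂₃) − (9/2)ħ, L₂ := ħ∂₂ − ħ((8/3)x₃∂₁ + 3x₁∂₂) − (3ħ²/80)∂₃², L₃ := ħ∂₃ − ħ((5/3)x₂∂₁ + 3x₁∂₃) + 60x₃². Then [L₁, L₂] = 2ħL₂, [L₁, L₃] = −2ħL₃, and [L₂, L₃] = ħL₁; that is, (L₁, L₂, L₃) is a quantum Airy structure whose underlying Lie algebra is the simple Lie algebra sl₂(ℂ). -/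

import Mathlib

noncomputable section

/-- Multiplication by the variable `x_i`, as a `ℂ[ħ]`-linear endomorphism of
`ℂ[ħ][x₁, x₂, x₃]`. -/
def xOp3 (i : Fin 3) : Module.End (Polynomial ℂ) (MvPolynomial (Fin 3) (Polynomial ℂ)) :=
  LinearMap.mulLeft (Polynomial ℂ) (MvPolynomial.X i)

/-- The formal partial derivative `∂_i` on `ℂ[ħ][x₁, x₂, x₃]`. -/
def dOp3 (i : Fin 3) : Module.End (Polynomial ℂ) (MvPolynomial (Fin 3) (Polynomial ℂ)) :=
  (MvPolynomial.pderiv i).toLinearMap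

/-- `L₁ = ħ∂₁ − ħ(3x₁∂₁ + 5x₂∂₂ + x₃∂₃) − (9/2)ħ`  (here `ħ = Polynomial.X`). -/
def Lsl1 : Module.End (Polynomial ℂ) (MvPolynomial (Fin 3) (Polynomial ℂ)) :=
  (Polynomial.X : Polynomial ℂ) • dOp3 0
    - (Polynomial.X : Polynomial ℂ) •
        ((3 : Polynomial ℂ) • (xOp3 0 * dOp3 0) + (5 : Polynomial ℂ) • (xOp3 1 * dOp3 1)
          + xOp3 2 * dOp3 2)
    - (Polynomial.X * Polynomial.C ((9 : ℂ) / 2)) •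
        (1 : Module.End (Polynomial ℂ) (MvPolynomial (Fin 3) (Polynomial ℂ)))

/-- `L₂ = ħ∂₂ − ħ((8/3)x₃∂₁ + 3x₁∂₂) − (3ħ²/80)∂₃²`. -/
def Lsl2 : Module.End (Polynomial ℂ) (MvPolynomial (Fin 3) (Polynomial ℂ)) :=
  (Polynomial.X : Polynomial ℂ) • dOp3 1
    - (Polynomial.X : Polynomial ℂ) •
        (Polynomial.C ((8 : ℂ) / 3) • (xOp3 2 * dOp3 0) + (3 : Polynomial ℂ) • (xOp3 0 * dOp3 1))
    - (Polynomial.X ^ 2 * Polynomial.C ((3 : ℂ) / 80)) • (dOp3 2 * dOp3 2)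

/-- `L₃ = ħ∂₃ − ħ((5/3)x₂∂₁ + 3x₁∂₃) + 60x₃²`. -/
def Lsl3 : Module.End (Polynomial ℂ) (MvPolynomial (Fin 3) (Polynomial ℂ)) :=
  (Polynomial.X : Polynomial ℂ) • dOp3 2
    - (Polynomial.X : Polynomial ℂ) •
        (Polynomial.C ((5 : ℂ) / 3) • (xOp3 1 * dOp3 0) + (3 : Polynomial ℂ) • (xOp3 0 * dOp3 2))
    + (60 : Polynomial ℂ) • (xOp3 2 * xOp3 2)

end

/-!
The operators are built from the multiplications `x_i` and derivations `∂_i` alone, so their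
brackets only depend on the canonical commutation relations `[∂_i, x_j] = δ_ij`,
`[x_i, x_j] = [∂_i, ∂_j] = 0`: expanding by bilinearity and the Leibniz rule reduces each
bracket to a linear combination of normally ordered words in `x` and `∂`, so the computation
can be done in any `ℂ[ħ]`-algebra containing elements that satisfy these relations.
-/

attribute [local instance] LieRing.ofAssociativeRing

namespace Ring

variable {A : Type*} [Ring A]

theorem lie_mul (a b c : A) : ⁅a, b * c⁆ = ⁅a, b⁆ * c + b * ⁅a, c⁆ := by
  simp only [lie_def]
  noncomm_ring

theorem mul_lie (a b c : A) : ⁅a * b, c⁆ = a * ⁅b, c⁆ + ⁅a, c⁆ * b := by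
  simp only [lie_def]
  noncomm_ring

theorem one_lie (a : A) : ⁅(1 : A), a⁆ = 0 := by
  simp [lie_def]

/-- `_root_.lie_smul` for an associative algebra, stated so that `simp` can unify its instances. -/
theorem lie_smul {R : Type*} [CommRing R] [Algebra R A] (r : R) (a b : A) :
    ⁅a, r • b⁆ = r • ⁅a, b⁆ :=
  _root_.lie_smul r a b

end Ring

structure CanonicalCommutation {ι A : Type*} [DecidableEq ι] [Ring A] (x d : ι → A) : Prop where
  x_lie_x : ∀ i j, ⁅x i, x j⁆ = 0
  d_lie_d : ∀ i j, ⁅d i, d j⁆ = 0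
  d_lie_x : ∀ i j, ⁅d i, x j⁆ = if i = j then 1 else 0

namespace CanonicalCommutation

variable {ι A : Type*} [DecidableEq ι] [Ring A] {x d : ι → A}

theorem x_lie_d (h : CanonicalCommutation x d) (i j : ι) :
    ⁅x i, d j⁆ = if j = i then -1 else 0 := by
  rw [← lie_skew, h.d_lie_x]
  split_ifs <;> simp

theorem d_mul_x (h : CanonicalCommutation x d) (i j : ι) :
    d i * x j = x j * d i + if i = j then 1 else 0 := by
  rw [← h.d_lie_x, Ring.lie_def]
  abel

end CanonicalCommutation

namespace MvPolynomial

theorem pderiv_pderiv_comm {σ R : Type*} [DecidableEq σ] [CommSemiring R] (i j : σ)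
    (p : MvPolynomial σ R) : pderiv i (pderiv j p) = pderiv j (pderiv i p) := by
  induction p using MvPolynomial.induction_on with
  | C a => simp
  | add p q hp hq => simp [hp, hq]
  | mul_X p k hp =>
    simp [hp, Pi.single_apply, apply_ite (pderiv i), apply_ite (pderiv j)]
    abel

theorem canonicalCommutation_X_pderiv (σ R : Type*) [DecidableEq σ] [CommRing R] :
    CanonicalCommutation (fun i ↦ LinearMap.mulLeft R (X i : MvPolynomial σ R))
      (fun i ↦ ((pderiv i : Derivation R (MvPolynomial σ R) (MvPolynomial σ R)) :
        Module.End R (MvPolynomial σ R))) where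
  x_lie_x i j := by
    refine LinearMap.ext fun p ↦ ?_
    simp [Ring.lie_def, mul_left_comm]
  d_lie_d i j := by
    refine LinearMap.ext fun p ↦ ?_
    simp [Ring.lie_def, pderiv_pderiv_comm i j]
  d_lie_x i j := by
    refine LinearMap.ext fun p ↦ ?_
    split_ifs with hij
    · subst hij
      simp [Ring.lie_def]
    · simp [Ring.lie_def, pderiv_X, Ne.symm hij]

end MvPolynomial

open Polynomial

noncomputable section

variable {A : Type*} [Ring A] [Algebra ℂ[X] A]

-- `Lsl1`, `Lsl2`, `Lsl3` are definitionally `airyLᵢ (fun i ↦ xOp3 i) (fun i ↦ dOp3 i)`.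

def airyL1 (x d : Fin 3 → A) : A :=
  (X : ℂ[X]) • d 0 - (X : ℂ[X]) • ((3 : ℂ[X]) • (x 0 * d 0) + (5 : ℂ[X]) • (x 1 * d 1) + x 2 * d 2)
    - (X * C ((9 : ℂ) / 2)) • (1 : A)

def airyL2 (x d : Fin 3 → A) : A :=
  (X : ℂ[X]) • d 1 - (X : ℂ[X]) • (C ((8 : ℂ) / 3) • (x 2 * d 0) + (3 : ℂ[X]) • (x 0 * d 1))
    - (X ^ 2 * C ((3 : ℂ) / 80)) • (d 2 * d 2)

def airyL3 (x d : Fin 3 → A) : A :=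
  (X : ℂ[X]) • d 2 - (X : ℂ[X]) • (C ((5 : ℂ) / 3) • (x 1 * d 0) + (3 : ℂ[X]) • (x 0 * d 2))
    + (60 : ℂ[X]) • (x 2 * x 2)

theorem airy_sl2_relations {x d : Fin 3 → A} (h : CanonicalCommutation x d) :
    ⁅airyL1 x d, airyL2 x d⁆ = ((2 : ℂ[X]) * X) • airyL2 x d ∧
    ⁅airyL1 x d, airyL3 x d⁆ = (-((2 : ℂ[X]) * X)) • airyL3 x d ∧
    ⁅airyL2 x d, airyL3 x d⁆ = (X : ℂ[X]) • airyL1 x d := by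
  refine ⟨?_, ?_, ?_⟩ <;>
  · simp only [airyL1, airyL2, airyL3, lie_add, add_lie, lie_sub, sub_lie, Ring.lie_smul, smul_lie,
      Ring.lie_mul, Ring.mul_lie, Ring.one_lie, h.d_lie_x, h.x_lie_d, h.x_lie_x, h.d_lie_d,
      Fin.reduceEq, ↓reduceIte]
    -- `[∂₃², x₃²]` produces `∂₃ x₃`; reordering it gives the constant term of `ħ L₁`
    simp only [mul_add, add_mul, sub_mul, mul_smul_comm, smul_mul_assoc, mul_zero, zero_mul,
      mul_one, one_mul, neg_mul, mul_neg, smul_zero, add_zero, zero_add, sub_zero, zero_sub,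
      h.d_mul_x, ↓reduceIte]
    -- `ring` treats the constants `C c` as atoms, so compare coefficients as functions on `ℂ`
    match_scalars <;> refine Polynomial.funext fun r ↦ ?_ <;>
      simp only [eval_mul, eval_add, eval_sub, eval_neg, eval_pow, eval_X, eval_C, eval_ofNat,
        eval_one] <;>
      ring

end

/-- The operators `(L₁, L₂, L₃)` form a quantum Airy structure based on `sl₂(ℂ)`:
`[L₁,L₂] = 2ħL₂`, `[L₁,L₃] = −2ħL₃` and `[L₂,L₃] = ħL₁`. -/
theorem stmt9 :
    (Lsl1 * Lsl2 - Lsl2 * Lsl1 = ((2 : Polynomial ℂ) * Polynomial.X) • Lsl2)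
    ∧ (Lsl1 * Lsl3 - Lsl3 * Lsl1 = (-((2 : Polynomial ℂ) * Polynomial.X)) • Lsl3)
    ∧ (Lsl2 * Lsl3 - Lsl3 * Lsl2 = (Polynomial.X : Polynomial ℂ) • Lsl1) :=
  airy_sl2_relations (MvPolynomial.canonicalCommutation_X_pderiv (Fin 3) ℂ[X])
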